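/- Let X have law N(μ, Σ) with Σ positive definite, and Z have law N(μ, β²Σ) with β² = (2-λ)/λ for λ ∈ (0,1), with X and Z independent. Then (1-λ)X + λZ has the same law as X, and consequently E[s(Z)] = E[f(X)], where s is the surrogate loss defined from f, λ, and the density of X. -/

import Mathlib

open MeasureTheory ProbabilityTheory

noncomputable def stdGaussian (d : ℕ) : Measure (EuclideanSpace ℝ (Fin d)) :=
  (Measure.pi fun _ : Fin d => gaussianReal 0 1).map
    (MeasurableEquiv.toLp 2 (Fin d → ℝ))

/-- The Gaussian measure `N(μ, S)` on `ℝ^d`, realised as the law of `μ + S^{1/2} W`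
for `W` standard Gaussian. -/
noncomputable def gaussianMeasure {d : ℕ} (μ : EuclideanSpace ℝ (Fin d))
    {S : Matrix (Fin d) (Fin d) ℝ} (hS : S.PosSemidef) :
    Measure (EuclideanSpace ℝ (Fin d)) :=
  (stdGaussian d).map (fun w => μ + Matrix.toEuclideanLin
    ((hS.1.eigenvectorUnitary : Matrix (Fin d) (Fin d) ℝ) *
      Matrix.diagonal (fun i => Real.sqrt (hS.1.eigenvalues i)) *
      (star hS.1.eigenvectorUnitary : Matrix (Fin d) (Fin d) ℝ)) w)

/-!
Writing `X ~ N(μ, S)` and `Z ~ N(μ, β² S)` with `β² = (2 - λ) / λ`, the characteristic function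
of `(1 - λ) X + λ Z` factors over the independent summands, so this combination is Gaussian with
mean `μ` and covariance `((1 - λ)² + λ² β²) S = S`. Hence `f((1 - λ) X + λ Z)` and `f(X)` have
the same expectation, and Fubini gives `E[s(Z)] = (1 - 1/λ) E[f(X)] + (1/λ) E[f(X)] = E[f(X)]`;
integrability comes from `|f x| ≤ |f 0| + ‖x‖` and the integrability of Gaussian vectors.
-/

open Matrix

theorem stdGaussian_eq_stdGaussian_euclideanSpace (d : ℕ) :
    _root_.stdGaussian d = ProbabilityTheory.stdGaussian (EuclideanSpace ℝ (Fin d)) :=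
  map_pi_eq_stdGaussian

open scoped MatrixOrder in
theorem Matrix.PosSemidef.cfcSqrt_eq {n : Type*} [Fintype n] [DecidableEq n]
    {S : Matrix n n ℝ} (hS : S.PosSemidef) :
    CFC.sqrt S = (hS.1.eigenvectorUnitary : Matrix n n ℝ) *
      diagonal (fun i => Real.sqrt (hS.1.eigenvalues i)) *
      (star hS.1.eigenvectorUnitary : Matrix n n ℝ) := by
  rw [CFC.sqrt_eq_cfc, cfc_nnreal_eq_real _ S hS.nonneg, hS.1.cfc_eq]
  simp [IsHermitian.cfc, Function.comp_def, Real.coe_sqrt, Real.coe_toNNReal',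
    max_eq_left (hS.eigenvalues_nonneg _)]

theorem gaussianMeasure_eq_multivariateGaussian {d : ℕ} (μ : EuclideanSpace ℝ (Fin d))
    {S : Matrix (Fin d) (Fin d) ℝ} (hS : S.PosSemidef) :
    gaussianMeasure μ hS = multivariateGaussian μ S := by
  rw [gaussianMeasure, multivariateGaussian, stdGaussian_eq_stdGaussian_euclideanSpace,
    hS.cfcSqrt_eq]
  rfl

theorem charFun_map_smul_add_smul_prod {E : Type*} [NormedAddCommGroup E] [InnerProductSpace ℝ E]
    [MeasurableSpace E] [BorelSpace E] [SecondCountableTopology E] (ν₁ ν₂ : Measure E)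
    [IsProbabilityMeasure ν₁] [IsProbabilityMeasure ν₂] (a b : ℝ) (t : E) :
    charFun ((ν₁.prod ν₂).map (fun q => a • q.1 + b • q.2)) t
      = charFun ν₁ (a • t) * charFun ν₂ (b • t) := by
  have := Measure.isProbabilityMeasure_map (μ := ν₁) (measurable_const_smul a).aemeasurable
  have := Measure.isProbabilityMeasure_map (μ := ν₂) (measurable_const_smul b).aemeasurable
  have hsplit : (fun q : E × E => a • q.1 + b • q.2)
      = (fun q => q.1 + q.2) ∘ Prod.map (a • ·) (b • ·) := rfl
  rw [hsplit, ← Measure.map_map (by fun_prop) (by fun_prop),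
    ← Measure.map_prod_map _ _ (by fun_prop) (by fun_prop), charFun_map_add_prod_eq_mul,
    Pi.mul_apply, charFun_map_smul, charFun_map_smul]

theorem multivariateGaussian_prod_map_smul_add_smul {ι : Type*} [Fintype ι] [DecidableEq ι]
    {μ₁ μ₂ : EuclideanSpace ℝ ι} {S₁ S₂ : Matrix ι ι ℝ} (hS₁ : S₁.PosSemidef)
    (hS₂ : S₂.PosSemidef) (a b : ℝ) :
    ((multivariateGaussian μ₁ S₁).prod (multivariateGaussian μ₂ S₂)).map
        (fun q => a • q.1 + b • q.2)
      = multivariateGaussian (a • μ₁ + b • μ₂) (a ^ 2 • S₁ + b ^ 2 • S₂) := by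
  have hS : (a ^ 2 • S₁ + b ^ 2 • S₂).PosSemidef :=
    (hS₁.smul (sq_nonneg a)).add (hS₂.smul (sq_nonneg b))
  refine Measure.ext_of_charFun (funext fun t => ?_)
  rw [charFun_map_smul_add_smul_prod, charFun_multivariateGaussian hS₁,
    charFun_multivariateGaussian hS₂, charFun_multivariateGaussian hS, ← Complex.exp_add]
  congr 1
  simp only [real_inner_smul_left, real_inner_smul_right, inner_add_right, WithLp.ofLp_smul,
    smul_mulVec, mulVec_smul, smul_dotProduct, dotProduct_smul, add_mulVec, dotProduct_add,
    smul_eq_mul]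
  push_cast
  ring

theorem LipschitzWith.integrable_of_integrable_id {E F : Type*} [NormedAddCommGroup E]
    [MeasurableSpace E] [OpensMeasurableSpace E] [SecondCountableTopology E]
    [NormedAddCommGroup F] {μ : Measure E} [IsFiniteMeasure μ] {K : NNReal} {f : E → F}
    (hf : LipschitzWith K f) (hμ : Integrable id μ) : Integrable f μ := by
  refine ((integrable_const ‖f 0‖).add (hμ.norm.const_mul K)).mono'
    hf.continuous.aestronglyMeasurable (ae_of_all _ fun x => ?_)
  have hlip := hf.norm_sub_le x 0
  simp only [sub_zero] at hlip
  simp only [Pi.add_apply, id]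
  linarith [norm_le_insert' (f x) (f 0)]

noncomputable def surrogate {E : Type*} [AddCommGroup E] [Module ℝ E] [MeasurableSpace E]
    (ν : Measure E) (f : E → ℝ) (l : ℝ) (z : E) : ℝ :=
  ∫ x, ((1 - 1 / l) * f x + (1 / l) * f ((1 - l) • x + l • z)) ∂ν

theorem integral_surrogate_of_map_eq {E : Type*} [NormedAddCommGroup E] [NormedSpace ℝ E]
    [MeasurableSpace E] [BorelSpace E] [SecondCountableTopology E] {ν₁ ν₂ : Measure E}
    [IsProbabilityMeasure ν₁] [IsProbabilityMeasure ν₂] {l : ℝ}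
    (hlaw : (ν₁.prod ν₂).map (fun q => (1 - l) • q.1 + l • q.2) = ν₁)
    {f : E → ℝ} (hf : Integrable f ν₁) :
    ∫ z, surrogate ν₁ f l z ∂ν₂ = ∫ x, f x ∂ν₁ := by
  set g := fun q : E × E => (1 - l) • q.1 + l • q.2
  have hg : Measurable g := by fun_prop
  have hfst : Integrable (fun q : E × E => f q.1) (ν₁.prod ν₂) := hf.comp_fst ν₂
  have hfg : Integrable (fun q => f (g q)) (ν₁.prod ν₂) :=
    Integrable.comp_measurable (by rwa [hlaw]) hg
  have hsum : Integrable (fun q => (1 - 1 / l) * f q.1 + (1 / l) * f (g q)) (ν₁.prod ν₂) :=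
    (hfst.const_mul _).add (hfg.const_mul _)
  calc ∫ z, surrogate ν₁ f l z ∂ν₂
      = ∫ q, ((1 - 1 / l) * f q.1 + (1 / l) * f (g q)) ∂(ν₁.prod ν₂) := by
        rw [integral_prod _ hsum]
        exact (integral_integral_swap hsum).symm
    _ = (1 - 1 / l) * ∫ x, f x ∂ν₁ + (1 / l) * ∫ x, f x ∂(ν₁.prod ν₂).map g := by
        rw [integral_add (hfst.const_mul _) (hfg.const_mul _), integral_const_mul,
          integral_const_mul, integral_fun_fst, integral_map hg.aemeasurable
            (by rw [hlaw]; exact hf.aestronglyMeasurable)]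
        simp
    _ = ∫ x, f x ∂ν₁ := by rw [hlaw]; ring

theorem surrogate_expectation_general {d : ℕ} (μ : EuclideanSpace ℝ (Fin d))
    {S : Matrix (Fin d) (Fin d) ℝ} (hS : S.PosSemidef)
    (l : ℝ)
    (hS2 : (((2 - l) / l) • S).PosSemidef)
    (f : EuclideanSpace ℝ (Fin d) → ℝ)
    (hlip : LipschitzWith 1 f) :
    Measure.map
        (fun q : EuclideanSpace ℝ (Fin d) × EuclideanSpace ℝ (Fin d) =>
          (1 - l) • q.1 + l • q.2)
        ((gaussianMeasure μ hS).prod (gaussianMeasure μ hS2)) = gaussianMeasure μ hS ∧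
      ∫ z, (∫ x, ((1 - 1 / l) * f x + (1 / l) * f ((1 - l) • x + l • z))
          ∂(gaussianMeasure μ hS)) ∂(gaussianMeasure μ hS2)
        = ∫ x, f x ∂(gaussianMeasure μ hS) := by
  -- also true at `l = 0`, where `(2 - l) / l = 0`
  have hcoef : (1 - l) ^ 2 + l ^ 2 * ((2 - l) / l) = 1 := by
    field_simp
    ring
  have hlaw : Measure.map
        (fun q : EuclideanSpace ℝ (Fin d) × EuclideanSpace ℝ (Fin d) =>
          (1 - l) • q.1 + l • q.2)
        ((gaussianMeasure μ hS).prod (gaussianMeasure μ hS2)) = gaussianMeasure μ hS := by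
    rw [gaussianMeasure_eq_multivariateGaussian, gaussianMeasure_eq_multivariateGaussian,
      multivariateGaussian_prod_map_smul_add_smul hS hS2, ← add_smul, sub_add_cancel, one_smul,
      smul_smul, ← add_smul, hcoef, one_smul]
  refine ⟨hlaw, ?_⟩
  simp only [gaussianMeasure_eq_multivariateGaussian] at hlaw ⊢
  exact integral_surrogate_of_map_eq hlaw
    (hlip.integrable_of_integrable_id IsGaussian.integrable_id)

theorem surrogate_expectation {d : ℕ} (μ : EuclideanSpace ℝ (Fin d))
    {S : Matrix (Fin d) (Fin d) ℝ} (hS : S.PosSemidef)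
    (l : ℝ) (hl0 : 0 < l) (hl1 : l < 1)
    (hS2 : (((2 - l) / l) • S).PosSemidef)
    (f : EuclideanSpace ℝ (Fin d) → ℝ)
    (hconv : ConvexOn ℝ Set.univ f) (hlip : LipschitzWith 1 f) :
    Measure.map
        (fun q : EuclideanSpace ℝ (Fin d) × EuclideanSpace ℝ (Fin d) =>
          (1 - l) • q.1 + l • q.2)
        ((gaussianMeasure μ hS).prod (gaussianMeasure μ hS2)) = gaussianMeasure μ hS ∧
      ∫ z, (∫ x, ((1 - 1 / l) * f x + (1 / l) * f ((1 - l) • x + l • z))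
          ∂(gaussianMeasure μ hS)) ∂(gaussianMeasure μ hS2)
        = ∫ x, f x ∂(gaussianMeasure μ hS) :=
  surrogate_expectation_general μ hS l hS2 f hlip
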